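/- arXiv:1912.04668 — 6 statements merged into one kernel-verified Lean document; each statement's English description precedes it below -/
import Mathlib

section
/- Let G be a dense additive subgroup of a complete topological vector space V over ℝ. Then the restriction map r_G, sending φ ∈ Φ(G) to φ↾G, is a group isomorphism from Φ(G) onto the group Aut(G) of topological group automorphisms of G, where Φ(G) = {φ : φ is a linear homeomorphism of V onto itself with φ(G) = G}. -/
/-!
A topological automorphism `f` of the dense subgroup `G` is uniformly continuous, so `f` and `f⁻¹`
extend to continuous additive self-maps of the complete space `V`; these are mutually inverse
because they are so on the dense set `G`, and continuous additive maps between real topological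
vector spaces are `ℝ`-linear. Conversely, every `φ ∈ Φ(G)` restricts to a topological automorphism
of `G`, and `φ` is recovered from this restriction since continuous maps into a Hausdorff space are
determined by their values on a dense set.
-/

open Set

namespace AddEquiv

variable {V W : Type*} [AddGroup V] [AddGroup W] {G : AddSubgroup V} {H : AddSubgroup W}

def restrictAddSubgroup (e : V ≃+ W) (h : e '' G = H) : G ≃+ H :=
  (e.addSubgroupMap G).trans (AddEquiv.addSubgroupCongr (SetLike.coe_injective (by simpa using h)))

variable [TopologicalSpace V] [TopologicalSpace W]

theorem continuous_restrictAddSubgroup {e : V ≃+ W} (h : e '' G = H) (he : Continuous e) :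
    Continuous (e.restrictAddSubgroup h) :=
  (he.comp continuous_subtype_val).subtype_mk _

theorem continuous_restrictAddSubgroup_symm {e : V ≃+ W} (h : e '' G = H) (he : Continuous e.symm) :
    Continuous (e.restrictAddSubgroup h).symm :=
  (he.comp continuous_subtype_val).subtype_mk _

theorem continuous_subtype_comp (f : G ≃+ H) (hf : Continuous f) :
    Continuous (H.subtype.comp (f : G →+ H)) :=
  continuous_subtype_val.comp hf

end AddEquiv

namespace Dense

section AddMonoidHom

variable {V W : Type*} [AddGroup V] [UniformSpace V] [IsUniformAddGroup V]
  [AddGroup W] [UniformSpace W] [IsUniformAddGroup W] [CompleteSpace W]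
  {G : AddSubgroup V} (hG : Dense (G : Set V)) (f : G →+ W) (hf : Continuous f)

include hf in
theorem uniformContinuous_extend_addMonoidHom : UniformContinuous (hG.extend f) :=
  have hfu : UniformContinuous f := uniformContinuous_addMonoidHom_of_continuous hf
  hG.uniformContinuous_extend hfu

variable [T2Space W]

noncomputable def extendAddMonoidHom : V →+ W where
  toFun := hG.extend f
  map_zero' := by simpa using hG.extend_eq hf 0
  map_add' := by
    have := (hG.uniformContinuous_extend_addMonoidHom f hf).continuous
    refine fun x y => hG.denseRange_val.induction_on₂
      (isClosed_eq (by fun_prop) (by fun_prop)) (fun a b => ?_) x y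
    simp only [← AddSubgroup.coe_add, hG.extend_eq hf, map_add]

@[simp]
theorem extendAddMonoidHom_coe (g : G) : hG.extendAddMonoidHom f hf g = f g :=
  hG.extend_eq hf g

@[fun_prop]
theorem continuous_extendAddMonoidHom : Continuous (hG.extendAddMonoidHom f hf) :=
  (hG.uniformContinuous_extend_addMonoidHom f hf).continuous

end AddMonoidHom

section AddEquiv

variable {V W : Type*} [AddGroup V] [UniformSpace V] [IsUniformAddGroup V] [CompleteSpace V]
  [T2Space V] [AddGroup W] [UniformSpace W] [IsUniformAddGroup W] [CompleteSpace W] [T2Space W]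
  {G : AddSubgroup V} {H : AddSubgroup W} (hG : Dense (G : Set V)) (hH : Dense (H : Set W))
  (f : G ≃+ H)

theorem extendAddMonoidHom_symm_extendAddMonoidHom
    (hf : Continuous (H.subtype.comp (f : G →+ H)))
    (hf' : Continuous (G.subtype.comp (f.symm : H →+ G))) (x : V) :
    hH.extendAddMonoidHom _ hf' (hG.extendAddMonoidHom _ hf x) = x := by
  have hc := (hH.continuous_extendAddMonoidHom _ hf').comp (hG.continuous_extendAddMonoidHom _ hf)
  refine congrFun (hc.ext_on hG continuous_id fun x hx => ?_) x
  lift x to G using hx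
  simp

noncomputable def extendAddEquiv (hf : Continuous f) (hf' : Continuous f.symm) : V ≃+ W :=
  { hG.extendAddMonoidHom _ (f.continuous_subtype_comp hf) with
    invFun := hH.extendAddMonoidHom _ (f.symm.continuous_subtype_comp hf')
    left_inv := extendAddMonoidHom_symm_extendAddMonoidHom hG hH f _ _
    right_inv := extendAddMonoidHom_symm_extendAddMonoidHom hH hG f.symm _ _ }

theorem continuous_extendAddEquiv (hf : Continuous f) (hf' : Continuous f.symm) :
    Continuous (hG.extendAddEquiv hH f hf hf') :=
  hG.continuous_extendAddMonoidHom _ (f.continuous_subtype_comp hf)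

theorem continuous_extendAddEquiv_symm (hf : Continuous f) (hf' : Continuous f.symm) :
    Continuous (hG.extendAddEquiv hH f hf hf').symm :=
  hH.continuous_extendAddMonoidHom _ (f.symm.continuous_subtype_comp hf')

@[simp]
theorem extendAddEquiv_coe (hf : Continuous f) (hf' : Continuous f.symm) (g : G) :
    hG.extendAddEquiv hH f hf hf' g = f g :=
  hG.extendAddMonoidHom_coe _ (f.continuous_subtype_comp hf) g

end AddEquiv

section RealLinearEquiv

variable {V W : Type*} [AddCommGroup V] [Module ℝ V] [UniformSpace V] [IsUniformAddGroup V]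
  [ContinuousSMul ℝ V] [CompleteSpace V] [T2Space V] [AddCommGroup W] [Module ℝ W]
  [UniformSpace W] [IsUniformAddGroup W] [ContinuousSMul ℝ W] [CompleteSpace W] [T2Space W]
  {G : AddSubgroup V} {H : AddSubgroup W} (hG : Dense (G : Set V)) (hH : Dense (H : Set W))
  (f : G ≃+ H) (hf : Continuous f) (hf' : Continuous f.symm)

noncomputable def extendRealLinearEquiv : V ≃L[ℝ] W :=
  (hG.extendAddEquiv hH f hf hf').toRealLinearEquiv (hG.continuous_extendAddEquiv hH f hf hf')
    (hG.continuous_extendAddEquiv_symm hH f hf hf')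

@[simp]
theorem extendRealLinearEquiv_coe (g : G) : hG.extendRealLinearEquiv hH f hf hf' g = f g :=
  hG.extendAddEquiv_coe hH f hf hf' g

theorem image_extendRealLinearEquiv :
    hG.extendRealLinearEquiv hH f hf hf' '' (G : Set V) = H := by
  rw [image_eq_range]
  change range (fun g : G => hG.extendRealLinearEquiv hH f hf hf' g) = _
  simp only [extendRealLinearEquiv_coe]
  rw [range_comp' Subtype.val f, f.surjective.range_eq, image_univ, Subtype.range_coe]

theorem extendRealLinearEquiv_eq {φ : V ≃L[ℝ] W} (hφ : ∀ g : G, φ g = f g) :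
    hG.extendRealLinearEquiv hH f hf hf' = φ := by
  refine ContinuousLinearEquiv.ext <|
    (hG.extendRealLinearEquiv hH f hf hf').continuous.ext_on hG φ.continuous fun x hx => ?_
  lift x to G using hx
  simp [hφ]

end RealLinearEquiv

end Dense

theorem stmt_1 {V : Type*} [AddCommGroup V] [Module ℝ V] [UniformSpace V]
    [IsUniformAddGroup V] [ContinuousSMul ℝ V] [CompleteSpace V] [T2Space V]
    (G : AddSubgroup V) (hG : Dense (G : Set V)) :
    ∃ e : {φ : V ≃L[ℝ] V // φ '' (G : Set V) = (G : Set V)} ≃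
        {f : G ≃+ G // Continuous f ∧ Continuous f.symm},
      ∀ (φ : {φ : V ≃L[ℝ] V // φ '' (G : Set V) = (G : Set V)}) (g : G),
        ((e φ).1 g : V) = (φ.1 : V ≃L[ℝ] V) (g : V) := by
  refine ⟨
    { toFun := fun φ => ⟨φ.1.toAddEquiv.restrictAddSubgroup φ.2,
        AddEquiv.continuous_restrictAddSubgroup φ.2 φ.1.continuous,
        AddEquiv.continuous_restrictAddSubgroup_symm φ.2 φ.1.symm.continuous⟩
      invFun := fun f => ⟨hG.extendRealLinearEquiv hG f.1 f.2.1 f.2.2,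
        hG.image_extendRealLinearEquiv hG f.1 f.2.1 f.2.2⟩
      left_inv := fun φ => Subtype.ext <| hG.extendRealLinearEquiv_eq hG _ _ _ fun _ => rfl
      right_inv := fun f => Subtype.ext <| AddEquiv.ext fun g => Subtype.ext <|
        hG.extendRealLinearEquiv_coe hG f.1 f.2.1 f.2.2 g },
    fun _ _ => rfl⟩
end

section
/- Let G be a nonzero additive subgroup of ℝ and set Φ(G) = {r ∈ ℝ \ {0} : r·G = G}. Then either |Φ(G)| = 2, or Φ(G) is infinite with cardinality at most |G|. -/
open Pointwise

theorem stmt_10 (G : AddSubgroup ℝ) (hG : G ≠ ⊥) :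
    {r : ℝ | r ≠ 0 ∧ r • (G : Set ℝ) = (G : Set ℝ)}.ncard = 2 ∨
      ({r : ℝ | r ≠ 0 ∧ r • (G : Set ℝ) = (G : Set ℝ)}.Infinite ∧
        Cardinal.mk {r : ℝ | r ≠ 0 ∧ r • (G : Set ℝ) = (G : Set ℝ)} ≤ Cardinal.mk G) := by
  set Φ : Set ℝ := {r : ℝ | r ≠ 0 ∧ r • (G : Set ℝ) = (G : Set ℝ)} with hΦ
  -- a nonzero element of G
  obtain ⟨g, hgG, hg0⟩ : ∃ g ∈ G, g ≠ 0 := by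
    by_contra h
    push_neg at h
    exact hG (by ext x; simpa using ⟨fun hx => h x hx, fun hx => by rw [hx]; exact G.zero_mem⟩)
  -- cardinality bound
  have hcard : Cardinal.mk Φ ≤ Cardinal.mk G := by
    have hinj : Function.Injective (fun r : Φ => (⟨r.1 * g, by
        have : r.1 * g ∈ r.1 • (G : Set ℝ) := by
          rw [show r.1 * g = r.1 • g from rfl]
          exact Set.smul_mem_smul_set hgG
        rwa [r.2.2] at this⟩ : G)) := by
      rintro ⟨r, hr⟩ ⟨s, hs⟩ h
      simp only [Subtype.mk.injEq] at h ⊢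
      exact mul_right_cancel₀ hg0 h
    exact Cardinal.mk_le_of_injective hinj
  -- -1 and 1 are in Φ
  have h1 : (1 : ℝ) ∈ Φ := ⟨one_ne_zero, one_smul _ _⟩
  have hm1 : (-1 : ℝ) ∈ Φ := by
    refine ⟨by norm_num, ?_⟩
    ext x
    constructor
    · rintro ⟨y, hy, rfl⟩
      simpa using G.neg_mem hy
    · intro hx
      exact ⟨-x, G.neg_mem hx, by simp⟩
  by_cases hfin : Φ.Infinite
  · exact Or.inr ⟨hfin, hcard⟩
  · left
    have hΦeq : Φ = {-1, 1} := by
      apply Set.Subset.antisymm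
      · intro r hr
        by_contra hr'
        simp only [Set.mem_insert_iff, Set.mem_singleton_iff] at hr'
        push_neg at hr'
        have habs : |r| ≠ 1 := by
          intro h
          rcases abs_eq (by norm_num : (0:ℝ) ≤ 1) |>.mp h with h | h
          · exact hr'.2 h
          · exact hr'.1 h
        have habs0 : 0 < |r| := abs_pos.mpr hr.1
        -- powers of r are in Φ and distinct
        have hpow : ∀ n : ℕ, r ^ n ∈ Φ := by
          intro n
          induction n with
          | zero => simpa using h1
          | succ n ih =>
            refine ⟨pow_ne_zero _ hr.1, ?_⟩
            rw [pow_succ, mul_comm, mul_smul, ih.2, hr.2]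
        have hinj : Function.Injective (fun n : ℕ => r ^ n) := by
          intro m n h
          have : |r| ^ m = |r| ^ n := by
            simp only [← abs_pow]; exact congrArg abs h
          exact pow_right_injective₀ habs0 habs this
        exact hfin (Set.infinite_of_injective_forall_mem hinj hpow)
      · intro r hr
        rcases hr with h | h
        · exact h ▸ hm1
        · exact h ▸ h1
    rw [hΦeq]
    exact Set.ncard_pair (by norm_num)
end

section
/- Let x be an irrational real number with x² ∈ ℚ, and let G = ℤ + ℚ·x = {z + q·x : z ∈ ℤ, q ∈ ℚ}. Then {r ∈ ℝ \ {0} : r·G = G} = {-1, 1}. -/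
/-!
If `r • G = G` then `r = r • 1 ∈ G`, say `r = a + b x`, and for every rational `q` also
`r • (q x) = b q x² + a q x ∈ G`. Since `1, x` are linearly independent over `ℚ` and `x² ∈ ℚˣ`,
this forces `b x² q ∈ ℤ` for all `q`, hence `b = 0` and `r ∈ ℤ`. The same applies to `r⁻¹`,
so `r` is a unit of `ℤ`.
-/

open Pointwise

def intAddRatMul (x : ℝ) : Set ℝ := {y | ∃ (z : ℤ) (q : ℚ), y = z + q * x}

theorem Irrational.eq_of_ratCast_add_mul_eq {x : ℝ} (hx : Irrational x) {a b c d : ℚ}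
    (h : (a : ℝ) + b * x = c + d * x) : a = c ∧ b = d := by
  have hbd : b = d := by
    by_contra hbd
    have hsub : ((b - d : ℚ) : ℝ) * x = (c - a : ℚ) := by push_cast; linarith
    exact (hx.ratCast_mul (sub_ne_zero.mpr hbd)).ne_rat _ hsub
  subst hbd
  exact ⟨by exact_mod_cast add_right_cancel h, rfl⟩

theorem Rat.eq_zero_of_forall_mul_isInt {c : ℚ} (h : ∀ q : ℚ, ∃ z : ℤ, c * q = z) : c = 0 := by
  by_contra hc
  obtain ⟨z, hz⟩ := h (1 / (2 * c))
  have hz2 : ((2 * z : ℤ) : ℚ) = 1 := by push_cast; rw [← hz]; field_simp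
  have : 2 * z = 1 := by exact_mod_cast hz2
  omega

theorem neg_intAddRatMul (x : ℝ) : -intAddRatMul x = intAddRatMul x := by
  have hneg : ∀ y ∈ intAddRatMul x, -y ∈ intAddRatMul x := by
    rintro y ⟨z, q, rfl⟩
    exact ⟨-z, -q, by push_cast; ring⟩
  ext y
  rw [Set.mem_neg]
  exact ⟨fun hy => neg_neg y ▸ hneg _ hy, hneg y⟩

theorem exists_eq_intCast_of_smul_intAddRatMul_eq {x r : ℝ} (hx : Irrational x) {Q : ℚ}
    (hQ : x ^ 2 = Q) (hr : r • intAddRatMul x = intAddRatMul x) : ∃ a : ℤ, r = a := by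
  have hmem : ∀ y ∈ intAddRatMul x, r * y ∈ intAddRatMul x := fun y hy =>
    hr ▸ Set.smul_mem_smul_set hy
  obtain ⟨a, b, hab⟩ := hmem 1 ⟨1, 0, by simp⟩
  rw [mul_one] at hab
  have hQ0 : Q ≠ 0 := by
    rintro rfl
    exact hx.ne_zero (pow_eq_zero_iff two_ne_zero |>.mp (by simpa using hQ))
  have hbQ : b * Q = 0 := by
    refine Rat.eq_zero_of_forall_mul_isInt fun q => ?_
    obtain ⟨z, q', hz⟩ := hmem (q * x) ⟨0, q, by simp⟩
    have h : ((b * Q * q : ℚ) : ℝ) + (a * q : ℚ) * x = ((z : ℚ) : ℝ) + q' * x := by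
      push_cast
      rw [← hz, hab, ← hQ]
      ring
    exact ⟨z, (hx.eq_of_ratCast_add_mul_eq h).1⟩
  refine ⟨a, ?_⟩
  simp [hab, (mul_eq_zero.mp hbQ).resolve_right hQ0]

theorem stmt_12 (x : ℝ) (hx : Irrational x) (hx2 : ∃ q : ℚ, x ^ 2 = (q : ℝ)) :
    {r : ℝ | r ≠ 0 ∧
        r • {y : ℝ | ∃ (z : ℤ) (q : ℚ), y = (z : ℝ) + (q : ℝ) * x} =
          {y : ℝ | ∃ (z : ℤ) (q : ℚ), y = (z : ℝ) + (q : ℝ) * x}} = {-1, 1} := by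
  obtain ⟨Q, hQ⟩ := hx2
  change {r : ℝ | r ≠ 0 ∧ r • intAddRatMul x = intAddRatMul x} = {-1, 1}
  ext r
  constructor
  · rintro ⟨hr0, hr⟩
    have hr' : r⁻¹ • intAddRatMul x = intAddRatMul x := by
      conv_lhs => rw [← hr]
      exact inv_smul_smul₀ hr0 _
    obtain ⟨a, rfl⟩ := exists_eq_intCast_of_smul_intAddRatMul_eq hx hQ hr
    obtain ⟨a', ha'⟩ := exists_eq_intCast_of_smul_intAddRatMul_eq hx hQ hr'
    have haa' : a * a' = 1 := by
      exact_mod_cast ha' ▸ mul_inv_cancel₀ hr0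
    rcases Int.eq_one_or_neg_one_of_mul_eq_one haa' with rfl | rfl <;> simp
  · rintro (rfl | rfl)
    · exact ⟨by norm_num, by rw [Set.neg_smul_set, one_smul, neg_intAddRatMul]⟩
    · exact ⟨one_ne_zero, one_smul _ _⟩
end

section
/- Let x be an irrational real number and G = ℚ + ℚ·x. If x² ∉ G, then {r ∈ ℝ \ {0} : r·G = G} = ℚ \ {0}. -/
open Pointwise

theorem stmt_13 (x : ℝ) (hx : Irrational x)
    (h : x ^ 2 ∉ {y : ℝ | ∃ p q : ℚ, y = (p : ℝ) + (q : ℝ) * x}) :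
    {r : ℝ | r ≠ 0 ∧
        r • {y : ℝ | ∃ p q : ℚ, y = (p : ℝ) + (q : ℝ) * x} =
          {y : ℝ | ∃ p q : ℚ, y = (p : ℝ) + (q : ℝ) * x}} =
      {r : ℝ | ∃ q : ℚ, q ≠ 0 ∧ r = (q : ℝ)} := by
  set G : Set ℝ := {y : ℝ | ∃ p q : ℚ, y = (p : ℝ) + (q : ℝ) * x} with hGdef
  ext r
  simp only [Set.mem_setOf_eq]
  constructor
  · rintro ⟨hr, hG⟩
    have h1 : (1 : ℝ) ∈ G := ⟨1, 0, by norm_num⟩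
    have hrG : r ∈ G := by
      have : r • (1 : ℝ) ∈ r • G := Set.smul_mem_smul_set h1
      rw [hG] at this
      simpa using this
    obtain ⟨p, q, hpq⟩ := hrG
    have hxG : x ∈ G := ⟨0, 1, by norm_num⟩
    have hrx : r * x ∈ G := by
      have : r • x ∈ r • G := Set.smul_mem_smul_set hxG
      rw [hG] at this
      simpa using this
    obtain ⟨p', q', he⟩ := hrx
    have hq0 : q = 0 := by
      by_contra hq
      apply h
      refine ⟨p' / q, (q' - p) / q, ?_⟩
      have hqR : (q : ℝ) ≠ 0 := by exact_mod_cast hq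
      rw [hpq] at he
      push_cast
      field_simp
      linear_combination he
    refine ⟨p, ?_, ?_⟩
    · rintro rfl
      rw [hpq, hq0] at hr
      simp at hr
    · rw [hpq, hq0]; simp
  · rintro ⟨q, hq, rfl⟩
    have hqR : (q : ℝ) ≠ 0 := by exact_mod_cast hq
    refine ⟨hqR, ?_⟩
    ext y
    constructor
    · rintro ⟨z, ⟨a, b, rfl⟩, rfl⟩
      exact ⟨q * a, q * b, by simp only [smul_eq_mul]; push_cast; ring⟩
    · rintro ⟨a, b, rfl⟩
      refine ⟨(a / q : ℚ) + (b / q : ℚ) * x, ⟨a / q, b / q, rfl⟩, ?_⟩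
      simp only [smul_eq_mul]
      push_cast
      field_simp
end

section
/- Let x > 1 be an integer. Then there exists an additive subgroup G of ℝ with {r ∈ ℝ \ {0} : r·G = G} = {±xᵐ : m ∈ ℤ} if and only if x is prime. Moreover, when x is prime, G = {z·xᵐ : z ∈ ℤ, m ∈ ℤ} (the subgroup generated by all integer multiples of integer powers of x) works. -/
/-!
If `x = a * b` with `1 < a < x`, then every additive subgroup `G` with `x • G = G` also has
`a • G = G`: indeed `a • G ⊆ G`, and `G = a • (b • G) ⊆ a • G`. So `a` stabilizes `G` without
being of the form `± xᵐ`.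

Conversely, let `G = {z * xᵐ : z, m ∈ ℤ}`. If `r • G = G` then `r, r⁻¹ ∈ G`, because `1 ∈ G`.
Writing `r = z * xᵐ` and `r⁻¹ = w * xᵏ`, we get that `z` divides a power of `x`. When `x` is prime
this forces `z = ± xⁱ`.
-/

open Pointwise

theorem Int.exists_dvd_one_lt_lt_of_not_prime {x : ℤ} (hx : 1 < x) (hp : ¬Prime x) :
    ∃ a : ℤ, a ∣ x ∧ 1 < a ∧ a < x := by
  have hn : 2 ≤ x.natAbs := by omega
  rw [Int.prime_iff_natAbs_prime, Nat.not_prime_iff_minFac_lt hn] at hp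
  refine ⟨x.natAbs.minFac, Int.natCast_dvd.2 x.natAbs.minFac_dvd, ?_, by omega⟩
  exact_mod_cast (Nat.minFac_prime (by omega)).one_lt

theorem Int.eq_pow_or_eq_neg_pow_of_dvd_prime_pow {x z : ℤ} (hp : Prime x) {s : ℕ}
    (h : z ∣ x ^ s) :
    ∃ i : ℕ, z = x ^ i ∨ z = -x ^ i := by
  obtain ⟨i, -, hi⟩ := (dvd_prime_pow hp s).1 h
  exact ⟨i, Int.associated_iff.1 hi⟩

theorem intCast_smul_subset {R : Type*} [Ring R] (G : AddSubgroup R) (a : ℤ) :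
    (a : R) • (G : Set R) ⊆ G := by
  rintro _ ⟨g, hg, rfl⟩
  simpa only [smul_eq_mul, ← zsmul_eq_mul, SetLike.mem_coe] using G.zsmul_mem hg a

theorem intCast_smul_eq_of_dvd {R : Type*} [Ring R] (G : AddSubgroup R) {a x : ℤ} (h : a ∣ x)
    (hx : (x : R) • (G : Set R) = G) : (a : R) • (G : Set R) = G := by
  obtain ⟨b, rfl⟩ := h
  refine (intCast_smul_subset G a).antisymm ?_
  calc (G : Set R) = (a : R) • (b : R) • (G : Set R) := by rw [smul_smul, ← Int.cast_mul, hx]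
    _ ⊆ (a : R) • (G : Set R) := Set.smul_set_mono (intCast_smul_subset G b)

section

variable {K : Type*} [Field K]

def zpowClosure (x : K) : AddSubgroup K :=
  AddSubgroup.closure {y | ∃ m : ℤ, y = x ^ m}

def scalarStabilizer (G : AddSubgroup K) : Set K :=
  {r | r ≠ 0 ∧ r • (G : Set K) = G}

def signedZPowers (x : K) : Set K :=
  {r | ∃ m : ℤ, r = x ^ m ∨ r = -(x ^ m)}

theorem zpow_mem_zpowClosure (x : K) (m : ℤ) : x ^ m ∈ zpowClosure x :=
  AddSubgroup.subset_closure ⟨m, rfl⟩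

theorem intCast_mul_zpow_eq_of_le {x : ℤ} (hx : (x : K) ≠ 0) (z : ℤ) {m k : ℤ} (h : m ≤ k) :
    (z : K) * (x : K) ^ k = ((z * x ^ (k - m).toNat : ℤ) : K) * (x : K) ^ m := by
  rw [Int.cast_mul, Int.cast_pow, ← zpow_natCast, Int.toNat_of_nonneg (by omega), mul_assoc,
    ← zpow_add₀ hx, sub_add_cancel]

theorem mem_zpowClosure_iff {x : ℤ} (hx : (x : K) ≠ 0) {y : K} :
    y ∈ zpowClosure (x : K) ↔ ∃ z m : ℤ, y = z * (x : K) ^ m := by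
  constructor
  · intro hy
    rw [zpowClosure] at hy
    induction hy using AddSubgroup.closure_induction with
    | mem y hy => obtain ⟨m, rfl⟩ := hy; exact ⟨1, m, by simp⟩
    | zero => exact ⟨0, 0, by simp⟩
    | add a b _ _ ha hb =>
      obtain ⟨z₁, m₁, rfl⟩ := ha
      obtain ⟨z₂, m₂, rfl⟩ := hb
      rw [intCast_mul_zpow_eq_of_le hx z₁ (min_le_left m₁ m₂),
        intCast_mul_zpow_eq_of_le hx z₂ (min_le_right m₁ m₂)]
      exact ⟨_, min m₁ m₂, by rw [← add_mul, ← Int.cast_add]⟩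
    | neg a _ ha =>
      obtain ⟨z, m, rfl⟩ := ha
      exact ⟨-z, m, by push_cast; ring⟩
  · rintro ⟨z, m, rfl⟩
    rw [← zsmul_eq_mul]
    exact AddSubgroup.zsmul_mem _ (zpow_mem_zpowClosure _ m) z

theorem inv_mem_signedZPowers {x r : K} (hr : r ∈ signedZPowers x) : r⁻¹ ∈ signedZPowers x := by
  obtain ⟨m, rfl | rfl⟩ := hr
  · exact ⟨-m, Or.inl (zpow_neg x m).symm⟩
  · exact ⟨-m, Or.inr (by rw [inv_neg, zpow_neg])⟩

theorem smul_zpowClosure_subset {x : ℤ} (hx : (x : K) ≠ 0) {r : K}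
    (hr : r ∈ signedZPowers (x : K)) :
    r • (zpowClosure (x : K) : Set K) ⊆ zpowClosure (x : K) := by
  rintro _ ⟨y, hy, rfl⟩
  obtain ⟨z, k, rfl⟩ := (mem_zpowClosure_iff hx).1 hy
  rw [SetLike.mem_coe, mem_zpowClosure_iff hx]
  obtain ⟨m, rfl | rfl⟩ := hr
  · exact ⟨z, m + k, by simp only [smul_eq_mul, zpow_add₀ hx]; ring⟩
  · exact ⟨-z, m + k, by simp only [smul_eq_mul, zpow_add₀ hx]; push_cast; ring⟩

theorem smul_eq_of_smul_subset_of_inv_smul_subset {s : Set K} {r : K} (hr : r ≠ 0)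
    (h : r • s ⊆ s) (h' : r⁻¹ • s ⊆ s) : r • s = s :=
  h.antisymm ((Set.subset_smul_set_iff₀ hr).2 h')

theorem signedZPowers_subset_scalarStabilizer {x : ℤ} (hx : (x : K) ≠ 0) :
    signedZPowers (x : K) ⊆ scalarStabilizer (zpowClosure (x : K)) := by
  intro r hr
  have hr0 : r ≠ 0 := by obtain ⟨m, rfl | rfl⟩ := hr <;> simp [zpow_ne_zero m hx]
  exact ⟨hr0, smul_eq_of_smul_subset_of_inv_smul_subset hr0 (smul_zpowClosure_subset hx hr)
    (smul_zpowClosure_subset hx (inv_mem_signedZPowers hr))⟩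

theorem mem_and_inv_mem_of_mem_scalarStabilizer {G : AddSubgroup K} (h1 : (1 : K) ∈ G) {r : K}
    (hr : r ∈ scalarStabilizer G) : r ∈ G ∧ r⁻¹ ∈ G := by
  obtain ⟨hr0, hrG⟩ := hr
  have hr' : r⁻¹ • (G : Set K) = G := by rw [inv_smul_eq_iff₀ hr0, hrG]
  constructor
  · rw [← SetLike.mem_coe, ← hrG]; exact ⟨1, h1, mul_one r⟩
  · rw [← SetLike.mem_coe, ← hr']; exact ⟨1, h1, mul_one r⁻¹⟩

theorem exists_dvd_pow_of_intCast_mul_zpow_eq_one [CharZero K] {x z w : ℤ}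
    (hx : (x : K) ≠ 0) {m : ℤ} (h : (z : K) * w * (x : K) ^ m = 1) : ∃ s : ℕ, z ∣ x ^ s := by
  have hm : m + (-m).toNat = m.toNat := by omega
  refine ⟨(-m).toNat, w * x ^ m.toNat, ?_⟩
  have : ((x ^ (-m).toNat : ℤ) : K) = ((z * (w * x ^ m.toNat) : ℤ) : K) := by
    push_cast
    rw [← zpow_natCast, ← zpow_natCast, ← hm, zpow_add₀ hx, ← mul_assoc, ← mul_assoc, h, one_mul]
  exact_mod_cast this

theorem scalarStabilizer_zpowClosure [CharZero K] {x : ℤ} (hp : Prime x) :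
    scalarStabilizer (zpowClosure (x : K)) = signedZPowers (x : K) := by
  have hx : (x : K) ≠ 0 := Int.cast_ne_zero.2 hp.ne_zero
  refine subset_antisymm (fun r hr => ?_) (signedZPowers_subset_scalarStabilizer hx)
  obtain ⟨hrG, hrG'⟩ := mem_and_inv_mem_of_mem_scalarStabilizer
    (by simpa using zpow_mem_zpowClosure (x : K) 0) hr
  obtain ⟨z, m, rfl⟩ := (mem_zpowClosure_iff hx).1 hrG
  obtain ⟨w, k, hwk⟩ := (mem_zpowClosure_iff hx).1 hrG'
  have hzw : (z : K) * w * (x : K) ^ (m + k) = 1 := by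
    rw [zpow_add₀ hx, ← mul_inv_cancel₀ hr.1, hwk]; ring
  obtain ⟨s, hs⟩ := exists_dvd_pow_of_intCast_mul_zpow_eq_one hx hzw
  obtain ⟨i, rfl | rfl⟩ := Int.eq_pow_or_eq_neg_pow_of_dvd_prime_pow hp hs
  · exact ⟨i + m, Or.inl (by push_cast; rw [zpow_add₀ hx, zpow_natCast])⟩
  · exact ⟨i + m, Or.inr (by push_cast; rw [zpow_add₀ hx, zpow_natCast]; ring)⟩

end

theorem le_of_one_lt_of_mem_signedZPowers {K : Type*} [Field K] [LinearOrder K]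
    [IsStrictOrderedRing K] {x a : K} (hx : 1 < x) (ha : 1 < a) (h : a ∈ signedZPowers x) :
    x ≤ a := by
  obtain ⟨m, rfl | rfl⟩ := h
  · have : 0 < m := (one_lt_zpow_iff_right₀ hx).1 ha
    simpa using (zpow_le_zpow_iff_right₀ hx).2 (show (1 : ℤ) ≤ m by omega)
  · linarith [zpow_pos (zero_lt_one.trans hx) m]

theorem prime_of_scalarStabilizer_eq {K : Type*} [Field K] [LinearOrder K]
    [IsStrictOrderedRing K] {x : ℤ} (hx : 1 < x) {G : AddSubgroup K}
    (hG : scalarStabilizer G = signedZPowers (x : K)) : Prime x := by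
  by_contra hp
  obtain ⟨a, hax, ha1, hax'⟩ := Int.exists_dvd_one_lt_lt_of_not_prime hx hp
  have hxG : (x : K) ∈ scalarStabilizer G := hG ▸ ⟨1, Or.inl (zpow_one _).symm⟩
  have haG : (a : K) ∈ scalarStabilizer G :=
    ⟨by positivity, intCast_smul_eq_of_dvd G hax hxG.2⟩
  rw [hG] at haG
  have := le_of_one_lt_of_mem_signedZPowers (by exact_mod_cast hx) (by exact_mod_cast ha1) haG
  exact absurd this (not_le.2 (by exact_mod_cast hax'))

theorem stmt_16 (x : ℤ) (hx : 1 < x) :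
    ((∃ G : AddSubgroup ℝ,
        {r : ℝ | r ≠ 0 ∧ r • (G : Set ℝ) = (G : Set ℝ)} =
          {r : ℝ | ∃ m : ℤ, r = (x : ℝ) ^ m ∨ r = -((x : ℝ) ^ m)}) ↔ Prime x) ∧
      (Prime x →
        {r : ℝ | r ≠ 0 ∧
            r • ((AddSubgroup.closure {y : ℝ | ∃ m : ℤ, y = (x : ℝ) ^ m} :
                AddSubgroup ℝ) : Set ℝ) =
              ((AddSubgroup.closure {y : ℝ | ∃ m : ℤ, y = (x : ℝ) ^ m} :
                AddSubgroup ℝ) : Set ℝ)} =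
          {r : ℝ | ∃ m : ℤ, r = (x : ℝ) ^ m ∨ r = -((x : ℝ) ^ m)}) :=
  ⟨⟨fun ⟨_, hG⟩ => prime_of_scalarStabilizer_eq hx hG,
    fun hp => ⟨_, scalarStabilizer_zpowClosure hp⟩⟩, scalarStabilizer_zpowClosure⟩
end

section
/- Let H be an additive subgroup of ℝ and n ≥ 1. Then H is divisible if and only if every matrix A ∈ GL(n,ℚ) (viewed in GL(n,ℝ)) satisfies Hⁿ·A = Hⁿ. -/
lemma aux_rat_mul_mem (H : AddSubgroup ℝ)
    (hdiv : ∀ m : ℤ, m ≠ 0 → (fun t : ℝ => (m : ℝ) * t) '' (H : Set ℝ) = (H : Set ℝ))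
    (q : ℚ) {t : ℝ} (ht : t ∈ H) : (q : ℝ) * t ∈ H := by
  rcases eq_or_ne q 0 with rfl | hq
  · simpa using H.zero_mem
  have hden : ((q.den : ℤ) : ℝ) ≠ 0 := by exact_mod_cast q.den_ne_zero
  obtain ⟨s, hs, hst⟩ : t ∈ (fun t : ℝ => ((q.den : ℤ) : ℝ) * t) '' (H : Set ℝ) := by
    rw [hdiv (q.den : ℤ) (by exact_mod_cast q.den_ne_zero)]
    exact ht
  have heq : (q : ℝ) * t = (q.num : ℝ) * s := by
    rw [← hst, Rat.cast_def]
    push_cast at hden ⊢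
    field_simp
  rw [heq]
  simpa [zsmul_eq_mul] using H.zsmul_mem hs q.num

lemma aux_vecMul_mem {n : ℕ} (H : AddSubgroup ℝ)
    (hdiv : ∀ m : ℤ, m ≠ 0 → (fun t : ℝ => (m : ℝ) * t) '' (H : Set ℝ) = (H : Set ℝ))
    (A : Matrix (Fin n) (Fin n) ℚ)
    (v : Fin n → ℝ) (hv : ∀ i, v i ∈ H) (j : Fin n) :
    Matrix.vecMul v (A.map ((↑) : ℚ → ℝ)) j ∈ H := by
  simp only [Matrix.vecMul, dotProduct, Matrix.map_apply]
  exact AddSubgroup.sum_mem H fun i _ => by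
    simpa [mul_comm] using aux_rat_mul_mem H hdiv (A i j) (hv i)

theorem stmt_18 (n : ℕ) (hn : 1 ≤ n) (H : AddSubgroup ℝ) :
    (∀ m : ℤ, m ≠ 0 → (fun t : ℝ => (m : ℝ) * t) '' (H : Set ℝ) = (H : Set ℝ)) ↔
      ∀ A : Matrix (Fin n) (Fin n) ℚ, IsUnit A →
        (fun v => Matrix.vecMul v (A.map ((↑) : ℚ → ℝ))) ''
            {v : Fin n → ℝ | ∀ i, v i ∈ H} =
          {v : Fin n → ℝ | ∀ i, v i ∈ H} := by
  constructor
  · intro hdiv A hA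
    have hdet : IsUnit A.det := (Matrix.isUnit_iff_isUnit_det A).mp hA
    ext w
    constructor
    · rintro ⟨v, hv, rfl⟩
      exact aux_vecMul_mem H hdiv A v hv
    · intro hw
      refine ⟨Matrix.vecMul w (A⁻¹.map ((↑) : ℚ → ℝ)), aux_vecMul_mem H hdiv A⁻¹ w hw, ?_⟩
      have hmap : (A⁻¹.map ((↑) : ℚ → ℝ)) * (A.map ((↑) : ℚ → ℝ)) = 1 := by
        have : ((A⁻¹ * A).map (Rat.castHom ℝ) : Matrix (Fin n) (Fin n) ℝ)
            = A⁻¹.map (Rat.castHom ℝ) * A.map (Rat.castHom ℝ) := Matrix.map_mul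
        rw [show (A⁻¹.map ((↑) : ℚ → ℝ)) = A⁻¹.map (Rat.castHom ℝ) from rfl,
          show (A.map ((↑) : ℚ → ℝ)) = A.map (Rat.castHom ℝ) from rfl, ← this,
          Matrix.nonsing_inv_mul A hdet]
        simp
      show Matrix.vecMul (Matrix.vecMul w (A⁻¹.map ((↑) : ℚ → ℝ))) (A.map ((↑) : ℚ → ℝ)) = w
      rw [Matrix.vecMul_vecMul, hmap, Matrix.vecMul_one]
  · intro hmat m hm
    set i0 : Fin n := ⟨0, hn⟩
    have hqm : ((m : ℚ) : ℝ) = (m : ℝ) := by push_cast; ring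
    have hA : IsUnit ((m : ℚ) • (1 : Matrix (Fin n) (Fin n) ℚ)) := by
      rw [Matrix.isUnit_iff_isUnit_det, Matrix.det_smul, Matrix.det_one, mul_one]
      exact (isUnit_iff_ne_zero).mpr (pow_ne_zero _ (by exact_mod_cast hm))
    have E := hmat ((m : ℚ) • (1 : Matrix (Fin n) (Fin n) ℚ)) hA
    have hvec : ∀ v : Fin n → ℝ,
        Matrix.vecMul v (((m : ℚ) • (1 : Matrix (Fin n) (Fin n) ℚ)).map ((↑) : ℚ → ℝ))
          = fun j => (m : ℝ) * v j := by
      intro v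
      funext j
      simp [Matrix.vecMul, dotProduct, Matrix.one_apply, apply_ite ((↑) : ℚ → ℝ),
        mul_ite, mul_zero, Finset.sum_ite_eq, mul_comm]
    ext t
    constructor
    · rintro ⟨s, hs, rfl⟩
      have hmem : (fun _ : Fin n => s) ∈ {v : Fin n → ℝ | ∀ i, v i ∈ H} := fun _ => hs
      have : Matrix.vecMul (fun _ : Fin n => s)
          (((m : ℚ) • (1 : Matrix (Fin n) (Fin n) ℚ)).map ((↑) : ℚ → ℝ))
          ∈ {v : Fin n → ℝ | ∀ i, v i ∈ H} := by
        rw [← E]; exact ⟨_, hmem, rfl⟩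
      have := this i0
      rwa [hvec] at this
    · intro ht
      have hmem : (fun _ : Fin n => t) ∈ {v : Fin n → ℝ | ∀ i, v i ∈ H} := fun _ => ht
      rw [← E] at hmem
      obtain ⟨v, hv, hveq⟩ := hmem
      simp only [] at hveq
      rw [hvec] at hveq
      have := congrFun hveq i0
      exact ⟨v i0, hv i0, this⟩
end
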